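/- arXiv:2412.01594 — 2 statements merged into one kernel-verified Lean document; each statement's English description precedes it below -/
import Mathlib

section
/- Assumption B holds if and only if Assumption B̲_{{α_n}} holds for every sequence α_n ↑ 1 in [0,1); that is, [w* < +∞ and sup_{α∈[0,1)} u_α(x) < +∞ for all x ∈ X] if and only if [for every sequence α_n ∈ [0,1) with α_n ↑ 1: w* < +∞ and liminf_{n→∞} u_{α_n}(x) < +∞ for all x ∈ X]. -/
open MeasureTheory ProbabilityTheory Filter Topology Set
open scoped ENNReal NNReal

noncomputable section

/-- The nonnegative part of an extended real, as an element of `ℝ≥0∞`. -/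
def eToENN (x : EReal) : ℝ≥0∞ := if x = ⊤ then ⊤ else ENNReal.ofReal x.toReal

/-- Extended integral of an `EReal`-valued function: positive part minus negative part. -/
def eInt {Y : Type*} [MeasurableSpace Y] (μ : Measure Y) (f : Y → EReal) : EReal :=
  ((∫⁻ y, eToENN (f y) ∂μ : ℝ≥0∞) : EReal) - ((∫⁻ y, eToENN (-(f y)) ∂μ : ℝ≥0∞) : EReal)

/-- Extended sum of an `EReal`-valued series: positive part minus negative part. -/
def eSum (f : ℕ → EReal) : EReal :=
  ((∑' t, eToENN (f t) : ℝ≥0∞) : EReal) - ((∑' t, eToENN (-(f t)) : ℝ≥0∞) : EReal)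

/-- Histories of length `t`: `(X × A) ^ t × X`. -/
abbrev Hist (X A : Type*) (t : ℕ) := (Fin t → X × A) × X

/-- A (randomized, history-dependent) policy: a regular transition probability from
histories to actions, at every time epoch. -/
structure Policy (X A : Type*) [MeasurableSpace X] [MeasurableSpace A] where
  π : ∀ t : ℕ, Kernel (Hist X A t) A
  markov : ∀ t, IsMarkovKernel (π t)

/-- A Markov decision process with state space `X`, action space `A`, one-step cost `c`
(measurable and bounded below, with values in `(-∞, +∞]`) and transition probability `q`. -/
structure MDP (X A : Type*) [MeasurableSpace X] [MeasurableSpace A] where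
  c : X → A → EReal
  q : Kernel (X × A) X
  markov : IsMarkovKernel q
  c_meas : Measurable fun p : X × A => c p.1 p.2
  c_ne_bot : ∃ K : ℝ, ∀ x a, (K : EReal) ≤ c x a

variable {X A : Type*} [MeasurableSpace X] [MeasurableSpace A]

/-- The deterministic policy given by a measurable map `φ : X → A` applied to the current state. -/
def detPolicy (φ : X → A) (hφ : Measurable φ) : Policy X A :=
  ⟨fun t => Kernel.deterministic (fun h : Hist X A t => φ h.2) (hφ.comp measurable_snd),
   fun _ => by infer_instance⟩

/-- The distribution `P_x^π` of the history `h_t`, constructed recursively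
(Ionescu-Tulcea finite-dimensional marginals). -/
def histMeas (M : MDP X A) (p : Policy X A) (x : X) : ∀ t : ℕ, Measure (Hist X A t)
  | 0 => Measure.dirac (Fin.elim0, x)
  | (t + 1) =>
      (histMeas M p x t).bind fun h =>
        ((p.π t) h).bind fun a =>
          (M.q (h.2, a)).map fun x' => (Fin.snoc h.1 (h.2, a), x')

/-- The joint distribution of the state-action pair `(x_t, a_t)` under `P_x^π`. -/
def saMeas (M : MDP X A) (p : Policy X A) (x : X) (t : ℕ) : Measure (X × A) :=
  (histMeas M p x t).bind fun h => ((p.π t) h).map fun a => (h.2, a)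

/-- `E_x^π c(x_t, a_t)`. -/
def expCost (M : MDP X A) (p : Policy X A) (x : X) (t : ℕ) : EReal :=
  eInt (saMeas M p x t) fun sa => M.c sa.1 sa.2

/-- The expected total discounted cost `v_α^π(x) = E_x^π ∑_t α^t c(x_t, a_t)`. -/
def vDisc (M : MDP X A) (α : ℝ) (p : Policy X A) (x : X) : EReal :=
  eSum fun t => ((α ^ t : ℝ) : EReal) * expCost M p x t

/-- The finite-horizon expected total (undiscounted) cost `v_{N,1}^π(x)`. -/
def vFin (M : MDP X A) (N : ℕ) (p : Policy X A) (x : X) : EReal :=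
  ∑ t ∈ Finset.range N, expCost M p x t

/-- The discounted value function `v_α(x) = inf_π v_α^π(x)`. -/
def vDiscOpt (M : MDP X A) (α : ℝ) (x : X) : EReal :=
  ⨅ p : Policy X A, vDisc M α p x

/-- The average cost per unit time `w^π(x)`. -/
def avgCost (M : MDP X A) (p : Policy X A) (x : X) : EReal :=
  Filter.limsup (fun N : ℕ => (((N : ℝ)⁻¹ : ℝ) : EReal) * vFin M N p x) atTop

/-- The optimal average cost `w(x) = inf_π w^π(x)`. -/
def avgOpt (M : MDP X A) (x : X) : EReal :=
  ⨅ p : Policy X A, avgCost M p x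

/-- `w* = inf_x w(x)`. -/
def wStar (M : MDP X A) : EReal := ⨅ x : X, avgOpt M x

/-- `m_α = inf_x v_α(x)`. -/
def mDisc (M : MDP X A) (α : ℝ) : EReal := ⨅ x : X, vDiscOpt M α x

/-- The discounted relative value function `u_α(x) = v_α(x) - m_α`. -/
def uDisc (M : MDP X A) (α : ℝ) (x : X) : EReal := vDiscOpt M α x - mDisc M α

/-- `w̄ = limsup_{α↑1} (1-α) m_α`. -/
def wBar (M : MDP X A) : EReal :=
  Filter.limsup (fun α : ℝ => ((1 - α : ℝ) : EReal) * mDisc M α) (𝓝[Set.Ico (0:ℝ) 1] 1)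

/-- `w̲ = liminf_{α↑1} (1-α) m_α`. -/
def wLow (M : MDP X A) : EReal :=
  Filter.liminf (fun α : ℝ => ((1 - α : ℝ) : EReal) * mDisc M α) (𝓝[Set.Ico (0:ℝ) 1] 1)

/-- `w̄_{{α_n}} = limsup_n (1-α_n) m_{α_n}`. -/
def wBarSeq (M : MDP X A) (a : ℕ → ℝ) : EReal :=
  Filter.limsup (fun n : ℕ => ((1 - a n : ℝ) : EReal) * mDisc M (a n)) atTop

/-- `w̲_{{α_n}} = liminf_n (1-α_n) m_{α_n}`. -/
def wLowSeq (M : MDP X A) (a : ℕ → ℝ) : EReal :=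
  Filter.liminf (fun n : ℕ => ((1 - a n : ℝ) : EReal) * mDisc M (a n)) atTop


section TopologicalAssumptions

variable {X A : Type*} [MetricSpace X] [TopologicalSpace.SeparableSpace X]
  [MeasurableSpace X] [BorelSpace X] [StandardBorelSpace X]
  [MetricSpace A] [TopologicalSpace.SeparableSpace A]
  [MeasurableSpace A] [BorelSpace A] [StandardBorelSpace A]

/-- Assumption W*(i): the cost `c` is `K`-inf-compact, i.e., for every nonempty compact
`K ⊆ X`, the restriction of `c` to `K × A` has compact sublevel sets. -/
def AssumptionWi (M : MDP X A) : Prop :=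
  ∀ K : Set X, K.Nonempty → IsCompact K →
    ∀ lam : ℝ, IsCompact {p : X × A | p.1 ∈ K ∧ M.c p.1 p.2 ≤ (lam : EReal)}

/-- Assumption W*(ii): the transition probability `q(·|x,a)` is weakly continuous in `(x,a)`. -/
def AssumptionWii (M : MDP X A) : Prop :=
  ∀ f : BoundedContinuousFunction X ℝ, Continuous fun p : X × A => ∫ y, f y ∂ (M.q p)

/-- Assumption S*(i): for each `x`, the function `a ↦ c(x,a)` has compact sublevel sets. -/
def AssumptionSi (M : MDP X A) : Prop :=
  ∀ x : X, ∀ lam : ℝ, IsCompact {a : A | M.c x a ≤ (lam : EReal)}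

/-- Assumption S*(ii): for each `x`, the transition probability `q(·|x,a)` is setwise
continuous in `a`. -/
def AssumptionSii (M : MDP X A) : Prop :=
  ∀ x : X, ∀ B : Set X, MeasurableSet B → Continuous fun a : A => M.q (x, a) B

end TopologicalAssumptions

/-!
The forward implication holds because a liminf along a sequence in `[0, 1)` is at most the
supremum over `[0, 1)`. Conversely, one sequence `αₙ ↑ 1` already gives `w* < ∞`; a finite
average cost forces the expected one-step costs of some policy to grow at most linearly, so
`m_α < ∞` for every `α`, and then `liminf u_{αₙ}(x) < ∞` yields discount factors `γ`
arbitrarily close to `1` with `v_γ(x) < ∞`. As the cost is bounded below by some `K ≤ 0`,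
for `α ≤ γ` the positive part of the discounted series only grows with the discount factor,
so `v_α(x) ≤ v_γ(x) + K / (γ - 1)` and `m_α ≥ K / (1 - γ)`: thus `u_α(x)` is bounded on every
`[0, β]` with `β < 1`. If `sup_α u_α(x) = ∞`, the discount factors where `u_α(x)` is large
accumulate at `1`, and a monotone subsequence of them contradicts the hypothesis.
-/

lemma eToENN_of_nonpos {x : EReal} (h : x ≤ 0) : eToENN x = 0 := by
  induction x with
  | bot => simp [eToENN]
  | coe r => simpa [eToENN] using h
  | top => simp at h

lemma eToENN_coe (r : ℝ) : eToENN (r : EReal) = ENNReal.ofReal r := by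
  rw [eToENN, if_neg (EReal.coe_ne_top r), EReal.toReal_coe]

lemma eToENN_mono : Monotone eToENN := by
  intro x y h
  by_cases hy : y = ⊤
  · simp [eToENN, hy]
  rcases le_or_gt x 0 with hx0 | hx0
  · simp [eToENN_of_nonpos hx0]
  have hx : x ≠ ⊤ := ne_top_of_le_ne_top hy h
  rw [eToENN, eToENN, if_neg hx, if_neg hy]
  exact ENNReal.ofReal_le_ofReal (EReal.toReal_le_toReal h (ne_bot_of_gt hx0) hy)

lemma eToENN_neg_le_ofReal {x : EReal} {K : ℝ} (h : (K : EReal) ≤ x) :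
    eToENN (-x) ≤ ENNReal.ofReal (-K) := by
  rw [← eToENN_coe, EReal.coe_neg]
  exact eToENN_mono (EReal.neg_le_neg_iff.2 h)

lemma eToENN_mul_le_mul {a b : ℝ} (ha : 0 ≤ a) (hab : a ≤ b) (x : EReal) :
    eToENN (a * x) ≤ eToENN (b * x) := by
  rcases le_or_gt x 0 with hx | hx
  · rw [eToENN_of_nonpos (mul_nonpos_of_nonneg_of_nonpos (EReal.coe_nonneg.2 ha) hx)]
    exact zero_le
  · exact eToENN_mono (mul_le_mul_of_nonneg_right (EReal.coe_le_coe_iff.2 hab) hx.le)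

lemma EReal.neg_coe_ennreal_le_sub (P Q : ℝ≥0∞) : -(Q : EReal) ≤ (P : EReal) - Q := by
  rw [sub_eq_add_neg]
  exact le_add_of_nonneg_left (EReal.coe_ennreal_nonneg P)

lemma coe_le_eInt {Y : Type*} [MeasurableSpace Y] {μ : Measure Y} (hμ : μ univ ≤ 1)
    {f : Y → EReal} {K : ℝ} (hK0 : K ≤ 0) (hf : ∀ y, (K : EReal) ≤ f y) :
    (K : EReal) ≤ eInt μ f := by
  have hneg : ∫⁻ y, eToENN (-f y) ∂μ ≤ ENNReal.ofReal (-K) :=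
    calc ∫⁻ y, eToENN (-f y) ∂μ ≤ ∫⁻ _, ENNReal.ofReal (-K) ∂μ :=
          lintegral_mono fun y => eToENN_neg_le_ofReal (hf y)
      _ = ENNReal.ofReal (-K) * μ univ := lintegral_const _
      _ ≤ ENNReal.ofReal (-K) := mul_le_of_le_one_right' hμ
  calc (K : EReal) = -((ENNReal.ofReal (-K) : ℝ≥0∞) : EReal) := by
        rw [EReal.coe_ennreal_ofReal, max_eq_left (neg_nonneg.2 hK0), EReal.coe_neg, neg_neg]
    _ ≤ -((∫⁻ y, eToENN (-f y) ∂μ : ℝ≥0∞) : EReal) :=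
        EReal.neg_le_neg_iff.2 (EReal.coe_ennreal_le_coe_ennreal_iff.2 hneg)
    _ ≤ eInt μ f := EReal.neg_coe_ennreal_le_sub _ _

lemma eSum_le_coe_tsum_eToENN (f : ℕ → EReal) : eSum f ≤ ((∑' t, eToENN (f t) : ℝ≥0∞) : EReal) :=
  EReal.sub_le_of_le_add (le_add_of_nonneg_right (EReal.coe_ennreal_nonneg _))

section eSum

variable {f : ℕ → EReal} {g : ℕ → ℝ}

lemma tsum_eToENN_neg_le (hg : Summable g) (hg0 : ∀ t, 0 ≤ g t)
    (hfg : ∀ t, ((-g t : ℝ) : EReal) ≤ f t) :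
    ∑' t, eToENN (-f t) ≤ ENNReal.ofReal (∑' t, g t) := by
  rw [ENNReal.ofReal_tsum_of_nonneg hg0 hg]
  exact ENNReal.tsum_le_tsum fun t => by simpa using eToENN_neg_le_ofReal (hfg t)

lemma coe_ofReal_tsum (hg0 : ∀ t, 0 ≤ g t) :
    ((ENNReal.ofReal (∑' t, g t) : ℝ≥0∞) : EReal) = ((∑' t, g t : ℝ) : EReal) := by
  rw [EReal.coe_ennreal_ofReal, max_eq_left (tsum_nonneg hg0)]

lemma neg_tsum_le_eSum (hg : Summable g) (hg0 : ∀ t, 0 ≤ g t)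
    (hfg : ∀ t, ((-g t : ℝ) : EReal) ≤ f t) : ((-∑' t, g t : ℝ) : EReal) ≤ eSum f :=
  calc ((-∑' t, g t : ℝ) : EReal) = -((ENNReal.ofReal (∑' t, g t) : ℝ≥0∞) : EReal) := by
        rw [coe_ofReal_tsum hg0, EReal.coe_neg]
    _ ≤ -((∑' t, eToENN (-f t) : ℝ≥0∞) : EReal) :=
        EReal.neg_le_neg_iff.2 <|
          EReal.coe_ennreal_le_coe_ennreal_iff.2 (tsum_eToENN_neg_le hg hg0 hfg)
    _ ≤ eSum f := EReal.neg_coe_ennreal_le_sub _ _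

lemma coe_tsum_eToENN_le_eSum_add (hg : Summable g) (hg0 : ∀ t, 0 ≤ g t)
    (hfg : ∀ t, ((-g t : ℝ) : EReal) ≤ f t) :
    ((∑' t, eToENN (f t) : ℝ≥0∞) : EReal) ≤ eSum f + ((∑' t, g t : ℝ) : EReal) := by
  rw [← EReal.sub_le_iff_le_add (by simp) (by simp), ← coe_ofReal_tsum hg0]
  exact EReal.sub_le_sub le_rfl
    (EReal.coe_ennreal_le_coe_ennreal_iff.2 (tsum_eToENN_neg_le hg hg0 hfg))

end eSum

lemma MeasureTheory.Measure.map_univ_le_one {Y Z : Type*} [MeasurableSpace Y] [MeasurableSpace Z]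
    {μ : Measure Y} (hμ : μ univ ≤ 1) (f : Y → Z) : μ.map f univ ≤ 1 := by
  by_cases h : AEMeasurable f μ
  · simpa [Measure.map_apply_of_aemeasurable h MeasurableSet.univ] using hμ
  · simp [Measure.map_of_not_aemeasurable h]

lemma MeasureTheory.Measure.bind_univ_le_one {Y Z : Type*} [MeasurableSpace Y] [MeasurableSpace Z]
    {μ : Measure Y} (hμ : μ univ ≤ 1) {f : Y → Measure Z} (hf : ∀ y, f y univ ≤ 1) :
    μ.bind f univ ≤ 1 := by
  by_cases h : AEMeasurable f μ
  · rw [Measure.bind, Measure.join_apply MeasurableSet.univ,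
      lintegral_map' (Measure.measurable_coe MeasurableSet.univ).aemeasurable h]
    calc ∫⁻ y, f y univ ∂μ ≤ ∫⁻ _, 1 ∂μ := lintegral_mono hf
      _ ≤ 1 := by simpa using hμ
  · simp [Measure.bind, Measure.map_of_not_aemeasurable h]

lemma le_coe_add_of_sum_range_le {e : ℕ → EReal} {K B : ℝ} (hK : ∀ t, (K : EReal) ≤ e t)
    {N t : ℕ} (ht : t < N) (hsum : ∑ s ∈ Finset.range N, e s ≤ B) :
    e t ≤ ((B + N * |K| : ℝ) : EReal) := by
  set s := (Finset.range N).erase t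
  have hrest : ((s.card • K : ℝ) : EReal) ≤ ∑ u ∈ s, e u := by
    rw [EReal.coe_nsmul, ← Finset.sum_const]
    exact Finset.sum_le_sum fun u _ => hK u
  have hadd : e t + ((s.card • K : ℝ) : EReal) ≤ B :=
    (add_le_add_right hrest _).trans
      ((Finset.add_sum_erase _ _ (Finset.mem_range.2 ht)).le.trans hsum)
  have hcard : (s.card : ℝ) ≤ N := by
    exact_mod_cast Finset.card_erase_le.trans (Finset.card_range N).le
  calc e t ≤ ((B - s.card • K : ℝ) : EReal) := by
        rwa [EReal.coe_sub,
          EReal.le_sub_iff_add_le (.inl (EReal.coe_ne_bot _)) (.inl (EReal.coe_ne_top _))]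
    _ ≤ ((B + N * |K| : ℝ) : EReal) := by
        rw [EReal.coe_le_coe_iff, nsmul_eq_mul]
        nlinarith [neg_abs_le K, abs_nonneg K, (s.card).cast_nonneg (α := ℝ)]

lemma exists_linear_bound_of_limsup_avg_lt_top {e : ℕ → EReal} {K : ℝ}
    (hK : ∀ t, (K : EReal) ≤ e t)
    (h : limsup (fun N : ℕ => (((N : ℝ)⁻¹ : ℝ) : EReal) * ∑ t ∈ Finset.range N, e t) atTop < ⊤) :
    ∃ a b : ℝ, 0 ≤ a ∧ 0 ≤ b ∧ ∀ t : ℕ, e t ≤ ((a * t + b : ℝ) : EReal) := by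
  obtain ⟨C, hC, -⟩ := EReal.lt_iff_exists_real_btwn.1 h
  obtain ⟨N₀, hN₀⟩ := eventually_atTop.1 (eventually_lt_of_limsup_lt hC)
  have hsum : ∀ N ≥ max N₀ 1, ∑ t ∈ Finset.range N, e t ≤ ((N * C : ℝ) : EReal) := by
    intro N hN
    have hNpos : (0 : ℝ) < N := by exact_mod_cast (le_max_right _ _).trans hN
    calc ∑ t ∈ Finset.range N, e t
        = ((N : ℝ) : EReal) * ((((N : ℝ)⁻¹ : ℝ) : EReal) * ∑ t ∈ Finset.range N, e t) := by
          rw [← mul_assoc, ← EReal.coe_mul, mul_inv_cancel₀ hNpos.ne', EReal.coe_one, one_mul]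
      _ ≤ ((N : ℝ) : EReal) * (C : EReal) :=
          mul_le_mul_of_nonneg_left (hN₀ N ((le_max_left _ _).trans hN)).le
            (EReal.coe_nonneg.2 hNpos.le)
      _ = ((N * C : ℝ) : EReal) := (EReal.coe_mul _ _).symm
  set N₁ := max N₀ 1
  refine ⟨|C| + |K|, (N₁ + 1) * (|C| + |K|), by positivity, by positivity, fun t => ?_⟩
  set N := max N₁ (t + 1)
  have hN : (N : ℝ) ≤ t + (N₁ + 1) := by exact_mod_cast (show N ≤ t + (N₁ + 1) by omega)
  refine (le_coe_add_of_sum_range_le hK (by omega) (hsum N (le_max_left _ _))).trans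
    (EReal.coe_le_coe_iff.2 ?_)
  nlinarith [le_abs_self C, abs_nonneg C, abs_nonneg K, N.cast_nonneg (α := ℝ)]

lemma tsum_eToENN_geometric_mul_lt_top {e : ℕ → EReal} {a b α : ℝ} (ha : 0 ≤ a) (hb : 0 ≤ b)
    (hα0 : 0 ≤ α) (hα1 : α < 1) (he : ∀ t : ℕ, e t ≤ ((a * t + b : ℝ) : EReal)) :
    ∑' t, eToENN (((α ^ t : ℝ) : EReal) * e t) < ⊤ := by
  have hsummable : Summable fun t : ℕ => α ^ t * (a * t + b) := by
    have hgeom := summable_geometric_of_lt_one hα0 hα1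
    have hlin : Summable fun t : ℕ => (t : ℝ) ^ 1 * α ^ t :=
      summable_pow_mul_geometric_of_norm_lt_one 1 (by rwa [Real.norm_of_nonneg hα0])
    exact ((hlin.mul_left a).add (hgeom.mul_left b)).congr fun t => by ring
  calc ∑' t, eToENN (((α ^ t : ℝ) : EReal) * e t)
      ≤ ∑' t : ℕ, ENNReal.ofReal (α ^ t * (a * t + b)) := ENNReal.tsum_le_tsum fun t => by
        rw [← eToENN_coe, EReal.coe_mul]
        exact eToENN_mono (mul_le_mul_of_nonneg_left (he t) (EReal.coe_nonneg.2 (by positivity)))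
    _ = ENNReal.ofReal (∑' t : ℕ, α ^ t * (a * t + b)) :=
        (ENNReal.ofReal_tsum_of_nonneg (fun t => by positivity) hsummable).symm
    _ < ⊤ := ENNReal.ofReal_lt_top

namespace MDP

lemma exists_nonpos_le_c (M : MDP X A) : ∃ K : ℝ, K ≤ 0 ∧ ∀ x a, (K : EReal) ≤ M.c x a := by
  obtain ⟨K, hK⟩ := M.c_ne_bot
  exact ⟨min K 0, min_le_right _ _,
    fun x a => (EReal.coe_le_coe_iff.2 (min_le_left _ _)).trans (hK x a)⟩

lemma histMeas_univ_le_one (M : MDP X A) (p : Policy X A) (x : X) (t : ℕ) :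
    histMeas M p x t univ ≤ 1 := by
  induction t with
  | zero => simp [histMeas]
  | succ t ih =>
    have := p.markov t
    have := M.markov
    refine Measure.bind_univ_le_one ih fun h => Measure.bind_univ_le_one (by simp) fun a => ?_
    exact Measure.map_univ_le_one (by simp) _

lemma saMeas_univ_le_one (M : MDP X A) (p : Policy X A) (x : X) (t : ℕ) :
    saMeas M p x t univ ≤ 1 := by
  have := p.markov t
  exact Measure.bind_univ_le_one (histMeas_univ_le_one M p x t)
    fun h => Measure.map_univ_le_one (by simp) _

variable {M : MDP X A} {K : ℝ}

lemma coe_le_expCost (hK0 : K ≤ 0) (hK : ∀ x a, (K : EReal) ≤ M.c x a)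
    (p : Policy X A) (x : X) (t : ℕ) : (K : EReal) ≤ expCost M p x t :=
  coe_le_eInt (saMeas_univ_le_one M p x t) hK0 fun sa => hK sa.1 sa.2

lemma neg_geometric_le_discounted_expCost (hK0 : K ≤ 0) (hK : ∀ x a, (K : EReal) ≤ M.c x a)
    {α : ℝ} (hα0 : 0 ≤ α) (p : Policy X A) (x : X) (t : ℕ) :
    ((-(α ^ t * -K) : ℝ) : EReal) ≤ ((α ^ t : ℝ) : EReal) * expCost M p x t := by
  rw [show -(α ^ t * -K) = α ^ t * K by ring, EReal.coe_mul]
  exact mul_le_mul_of_nonneg_left (coe_le_expCost hK0 hK p x t)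
    (EReal.coe_nonneg.2 (pow_nonneg hα0 t))

lemma summable_geometric_mul_neg {α : ℝ} (hα0 : 0 ≤ α) (hα1 : α < 1) (K : ℝ) :
    Summable fun t : ℕ => α ^ t * -K :=
  (summable_geometric_of_lt_one hα0 hα1).mul_right _

lemma tsum_geometric_mul_neg {α : ℝ} (hα0 : 0 ≤ α) (hα1 : α < 1) (K : ℝ) :
    ∑' t : ℕ, α ^ t * -K = (1 - α)⁻¹ * -K := by
  rw [tsum_mul_right, tsum_geometric_of_lt_one hα0 hα1]

lemma coe_le_vDisc (hK0 : K ≤ 0) (hK : ∀ x a, (K : EReal) ≤ M.c x a)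
    {α : ℝ} (hα0 : 0 ≤ α) (hα1 : α < 1) (p : Policy X A) (x : X) :
    (((1 - α)⁻¹ * K : ℝ) : EReal) ≤ vDisc M α p x := by
  have := neg_tsum_le_eSum (summable_geometric_mul_neg hα0 hα1 K)
    (fun t => mul_nonneg (pow_nonneg hα0 t) (neg_nonneg.2 hK0))
    (neg_geometric_le_discounted_expCost hK0 hK hα0 p x)
  rwa [tsum_geometric_mul_neg hα0 hα1, mul_neg, neg_neg] at this

lemma coe_le_mDisc (hK0 : K ≤ 0) (hK : ∀ x a, (K : EReal) ≤ M.c x a)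
    {α : ℝ} (hα0 : 0 ≤ α) (hα1 : α < 1) : (((1 - α)⁻¹ * K : ℝ) : EReal) ≤ mDisc M α :=
  le_iInf fun x => le_iInf fun p => coe_le_vDisc hK0 hK hα0 hα1 p x

lemma vDisc_le_add_of_le (hK0 : K ≤ 0) (hK : ∀ x a, (K : EReal) ≤ M.c x a)
    {α γ : ℝ} (hα0 : 0 ≤ α) (hαγ : α ≤ γ) (hγ1 : γ < 1) (p : Policy X A) (x : X) :
    vDisc M α p x ≤ vDisc M γ p x + (((1 - γ)⁻¹ * -K : ℝ) : EReal) := by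
  have hγ0 := hα0.trans hαγ
  calc vDisc M α p x ≤ ((∑' t, eToENN (((α ^ t : ℝ) : EReal) * expCost M p x t) : ℝ≥0∞) : EReal) :=
        eSum_le_coe_tsum_eToENN _
    _ ≤ ((∑' t, eToENN (((γ ^ t : ℝ) : EReal) * expCost M p x t) : ℝ≥0∞) : EReal) :=
        EReal.coe_ennreal_le_coe_ennreal_iff.2 <| ENNReal.tsum_le_tsum fun t =>
          eToENN_mul_le_mul (pow_nonneg hα0 t) (pow_le_pow_left₀ hα0 hαγ t) _
    _ ≤ vDisc M γ p x + ((∑' t : ℕ, γ ^ t * -K : ℝ) : EReal) :=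
        coe_tsum_eToENN_le_eSum_add (summable_geometric_mul_neg hγ0 hγ1 K)
          (fun t => mul_nonneg (pow_nonneg hγ0 t) (neg_nonneg.2 hK0))
          (neg_geometric_le_discounted_expCost hK0 hK hγ0 p x)
    _ = vDisc M γ p x + (((1 - γ)⁻¹ * -K : ℝ) : EReal) := by
        rw [tsum_geometric_mul_neg hγ0 hγ1]

lemma vDiscOpt_le_add_of_le (hK0 : K ≤ 0) (hK : ∀ x a, (K : EReal) ≤ M.c x a)
    {α γ : ℝ} (hα0 : 0 ≤ α) (hαγ : α ≤ γ) (hγ1 : γ < 1) (x : X) :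
    vDiscOpt M α x ≤ vDiscOpt M γ x + (((1 - γ)⁻¹ * -K : ℝ) : EReal) := by
  rw [← EReal.sub_le_iff_le_add (.inl (EReal.coe_ne_bot _)) (.inl (EReal.coe_ne_top _))]
  refine le_iInf fun p => ?_
  rw [EReal.sub_le_iff_le_add (.inl (EReal.coe_ne_bot _)) (.inl (EReal.coe_ne_top _))]
  exact (iInf_le _ p).trans (vDisc_le_add_of_le hK0 hK hα0 hαγ hγ1 p x)

lemma uDisc_le_of_le (hK0 : K ≤ 0) (hK : ∀ x a, (K : EReal) ≤ M.c x a)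
    {α γ : ℝ} (hα0 : 0 ≤ α) (hαγ : α ≤ γ) (hγ1 : γ < 1) (x : X) :
    uDisc M α x ≤ vDiscOpt M γ x + ((2 * ((1 - γ)⁻¹ * -K) : ℝ) : EReal) := by
  have hm : (((1 - γ)⁻¹ * K : ℝ) : EReal) ≤ mDisc M α := by
    refine le_trans (EReal.coe_le_coe_iff.2 ?_) (coe_le_mDisc hK0 hK hα0 (hαγ.trans_lt hγ1))
    exact mul_le_mul_of_nonpos_right (inv_anti₀ (by linarith) (by linarith)) hK0
  calc uDisc M α x
      ≤ (vDiscOpt M γ x + (((1 - γ)⁻¹ * -K : ℝ) : EReal)) - (((1 - γ)⁻¹ * K : ℝ) : EReal) :=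
        EReal.sub_le_sub (vDiscOpt_le_add_of_le hK0 hK hα0 hαγ hγ1 x) hm
    _ = vDiscOpt M γ x + ((2 * ((1 - γ)⁻¹ * -K) : ℝ) : EReal) := by
        rw [sub_eq_add_neg, add_assoc, ← EReal.coe_neg, ← EReal.coe_add]
        ring_nf

lemma mDisc_lt_top (hK0 : K ≤ 0) (hK : ∀ x a, (K : EReal) ≤ M.c x a) (hw : wStar M < ⊤)
    {α : ℝ} (hα0 : 0 ≤ α) (hα1 : α < 1) : mDisc M α < ⊤ := by
  obtain ⟨x, hx⟩ := iInf_lt_iff.1 hw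
  obtain ⟨p, hp⟩ := iInf_lt_iff.1 hx
  obtain ⟨a, b, ha, hb, hlin⟩ :=
    exists_linear_bound_of_limsup_avg_lt_top (coe_le_expCost hK0 hK p x) hp
  calc mDisc M α ≤ vDisc M α p x := (iInf_le _ x).trans (iInf_le _ p)
    _ ≤ _ := eSum_le_coe_tsum_eToENN _
    _ < ⊤ := lt_top_iff_ne_top.2 <| EReal.coe_ennreal_eq_top_iff.not.2
        (tsum_eToENN_geometric_mul_lt_top ha hb hα0 hα1 hlin).ne

lemma vDiscOpt_lt_top_of_uDisc_lt_top {α : ℝ} {x : X} (hm : mDisc M α ≠ ⊤)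
    (hu : uDisc M α x < ⊤) : vDiscOpt M α x < ⊤ := by
  by_contra hv
  rw [uDisc, not_lt_top_iff.1 hv, EReal.top_sub hm] at hu
  exact lt_irrefl _ hu

lemma exists_uDisc_le_of_liminf_lt_top (hK0 : K ≤ 0) (hK : ∀ x a, (K : EReal) ≤ M.c x a)
    (hw : wStar M < ⊤) {c : ℕ → ℝ} (hc : ∀ n, c n ∈ Ico 0 1) (hc1 : Tendsto c atTop (𝓝 1))
    {x : X} (hfin : liminf (fun n => uDisc M (c n) x) atTop < ⊤) {β : ℝ} (hβ : β < 1) :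
    ∃ C < ⊤, ∀ α ∈ Icc 0 β, uDisc M α x ≤ C := by
  obtain ⟨n, hn, hβn⟩ := ((frequently_lt_of_liminf_lt (h := hfin)).and_eventually
    (hc1.eventually (eventually_ge_nhds hβ))).exists
  have hv : vDiscOpt M (c n) x < ⊤ :=
    vDiscOpt_lt_top_of_uDisc_lt_top (mDisc_lt_top hK0 hK hw (hc n).1 (hc n).2).ne hn
  exact ⟨_, EReal.add_lt_top hv.ne (EReal.coe_ne_top _),
    fun α hα => uDisc_le_of_le hK0 hK hα.1 (hα.2.trans hβn) (hc n).2 x⟩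

end MDP

lemma exists_monotone_subseq_of_tendsto_of_lt {α : Type*} [LinearOrder α] [TopologicalSpace α]
    [OrderClosedTopology α] {u : ℕ → α} {x : α} (hu : Tendsto u atTop (𝓝 x))
    (hlt : ∀ n, u n < x) : ∃ φ : ℕ → ℕ, StrictMono φ ∧ Monotone (u ∘ φ) := by
  obtain ⟨g, hinc | hdec⟩ := exists_increasing_or_nonincreasing_subseq (· ≤ ·) u
  · exact ⟨g, g.strictMono, monotone_iff_forall_lt.2 hinc⟩
  -- a strictly decreasing subsequence would keep the limit below `u (g 0) < x`
  have : x ≤ u (g 0) := le_of_tendsto (hu.comp g.strictMono.tendsto_atTop)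
    ((eventually_gt_atTop 0).mono fun n hn => (not_le.1 (hdec 0 n hn)).le)
  exact absurd this (hlt (g 0)).not_ge

lemma exists_monotone_tendsto_one_tendsto_top {f : ℝ → EReal}
    (hbdd : ∀ β < 1, ∃ C < ⊤, ∀ α ∈ Icc 0 β, f α ≤ C) (hsup : ⨆ α ∈ Ico (0 : ℝ) 1, f α = ⊤) :
    ∃ b : ℕ → ℝ, (∀ n, b n ∈ Ico 0 1) ∧ Monotone b ∧ Tendsto b atTop (𝓝 1) ∧
      Tendsto (f ∘ b) atTop (𝓝 ⊤) := by
  obtain ⟨c, -, hc, hc1⟩ := exists_seq_strictMono_tendsto' (zero_lt_one' ℝ)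
  have key : ∀ n : ℕ, ∃ α ∈ Ico (c n) 1, ((n : ℝ) : EReal) ≤ f α := by
    intro n
    obtain ⟨C, hC, hCf⟩ := hbdd (c n) (hc n).2
    have : max C (n : ℝ) < ⨆ α ∈ Ico (0 : ℝ) 1, f α := hsup ▸ max_lt hC (EReal.coe_lt_top _)
    obtain ⟨α, hα, hlt⟩ := lt_biSup_iff.1 this
    refine ⟨α, ⟨le_of_not_gt fun h => ?_, hα.2⟩, (le_max_right _ _).trans hlt.le⟩
    exact (hCf α ⟨hα.1, h.le⟩).not_gt ((le_max_left _ _).trans_lt hlt)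
  choose a ha hfa using key
  have ha1 : Tendsto a atTop (𝓝 1) := tendsto_of_tendsto_of_tendsto_of_le_of_le hc1
    tendsto_const_nhds (fun n => (ha n).1) (fun n => (ha n).2.le)
  have hfa_top : Tendsto (f ∘ a) atTop (𝓝 ⊤) :=
    tendsto_nhds_top_mono' (EReal.tendsto_coe_atTop.comp tendsto_natCast_atTop_atTop) hfa
  obtain ⟨φ, hφ, hmono⟩ := exists_monotone_subseq_of_tendsto_of_lt ha1 fun n => (ha n).2
  exact ⟨a ∘ φ, fun n => ⟨(hc (φ n)).1.le.trans (ha (φ n)).1, (ha (φ n)).2⟩, hmono,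
    ha1.comp hφ.tendsto_atTop, hfa_top.comp hφ.tendsto_atTop⟩

section Statements

variable {X A : Type*} [MetricSpace X] [TopologicalSpace.SeparableSpace X]
  [MeasurableSpace X] [BorelSpace X] [StandardBorelSpace X]
  [MetricSpace A] [TopologicalSpace.SeparableSpace A]
  [MeasurableSpace A] [BorelSpace A] [StandardBorelSpace A]

/-- Assumption B holds if and only if Assumption B̲_{{α_n}} holds for
every sequence `α_n ↑ 1` in `[0,1)`: `[w* < +∞ and sup_{α ∈ [0,1)} u_α(x) < +∞ for all
x]` iff `[for every sequence α_n ∈ [0,1) with α_n ↑ 1 : w* < +∞ and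
liminf_n u_{α_n}(x) < +∞ for all x]`. -/
theorem statement8 (M : MDP X A) :
    (wStar M < ⊤ ∧ ∀ x : X, (⨆ α ∈ Set.Ico (0 : ℝ) 1, uDisc M α x) < ⊤)
    ↔ (∀ a : ℕ → ℝ, (∀ n, a n ∈ Set.Ico (0 : ℝ) 1) → Monotone a →
        Tendsto a atTop (𝓝 (1 : ℝ)) →
        wStar M < ⊤ ∧ ∀ x : X, Filter.liminf (fun n => uDisc M (a n) x) atTop < ⊤) := by
  constructor
  · rintro ⟨hw, hsup⟩ a ha - -
    exact ⟨hw, fun x => (liminf_le_of_frequently_le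
      (.of_forall fun n => le_biSup (fun α => uDisc M α x) (ha n))).trans_lt (hsup x)⟩
  intro h
  obtain ⟨K, hK0, hK⟩ := M.exists_nonpos_le_c
  obtain ⟨c, hc_mono, hc, hc1⟩ := exists_seq_strictMono_tendsto' (zero_lt_one' ℝ)
  have hc_mem : ∀ n, c n ∈ Ico 0 1 := fun n => ⟨(hc n).1.le, (hc n).2⟩
  obtain ⟨hw, hc_fin⟩ := h c hc_mem hc_mono.monotone hc1
  refine ⟨hw, fun x => ?_⟩
  by_contra hsup
  obtain ⟨b, hb, hb_mono, hb1, hb_top⟩ := exists_monotone_tendsto_one_tendsto_top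
    (fun β => MDP.exists_uDisc_le_of_liminf_lt_top hK0 hK hw hc_mem hc1 (hc_fin x))
    (not_lt_top_iff.1 hsup)
  exact ((h b hb hb_mono hb1).2 x).ne hb_top.liminf_eq

end Statements

end
end

section
/- Let a : ℕ → [0,+∞]. Then limsup_{α→1⁻} (1−α) Σ_{t=0}^{∞} α^t a_t ≤ limsup_{N→∞} (1/N) Σ_{t=0}^{N−1} a_t, where the left-hand limsup is taken along the filter of α ∈ [0,1) tending to 1, all sums and products are in the extended nonnegative reals, and Σ_{t=0}^{∞} α^t a_t denotes the (possibly infinite) sum of the series. -/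
open Filter Topology Set
open scoped ENNReal

/-! If the Cesàro means of `a` are eventually below `c`, then the partial sums satisfy
`S n ≤ c (K + n)` for all `n`. The Cauchy product with the geometric series gives
`(1 - r)⁻¹ ∑ rᵗ aₜ = ∑ rⁿ S (n + 1)`, hence `(1 - r) ∑ rᵗ aₜ ≤ c K (1 - r) + c`,
which tends to `c` as `r → 1`. -/

section

open Finset

theorem ENNReal.tsum_mul_tsum_eq_tsum_sum_antidiagonal (f g : ℕ → ℝ≥0∞) :
    (∑' n, f n) * ∑' n, g n = ∑' n, ∑ kl ∈ antidiagonal n, f kl.1 * g kl.2 := by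
  simp_rw [← ENNReal.tsum_mul_right, ← ENNReal.tsum_mul_left]
  rw [← ENNReal.tsum_prod, ← HasAntidiagonal.sigmaAntidiagonalEquivProd.tsum_eq,
    ENNReal.tsum_sigma']
  exact tsum_congr fun n => tsum_subtype (antidiagonal n) fun kl => f kl.1 * g kl.2

theorem ENNReal.inv_one_sub_mul_tsum_pow_mul (r : ℝ≥0∞) (a : ℕ → ℝ≥0∞) :
    (1 - r)⁻¹ * ∑' t, r ^ t * a t = ∑' n, r ^ n * ∑ t ∈ range (n + 1), a t := by
  rw [mul_comm, ← ENNReal.tsum_geometric, tsum_mul_tsum_eq_tsum_sum_antidiagonal]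
  refine tsum_congr fun n => ?_
  rw [← Nat.sum_antidiagonal_eq_sum_range_succ_mk (fun kl => a kl.1), mul_sum]
  refine sum_congr rfl fun kl hkl => ?_
  rw [← mem_antidiagonal.mp hkl, pow_add]
  ring

theorem ENNReal.one_sub_mul_tsum_pow_mul_le {r c : ℝ≥0∞} {K : ℕ} {a : ℕ → ℝ≥0∞} (hr : r < 1)
    (ha : ∀ n, ∑ t ∈ range n, a t ≤ c * (K + n)) :
    (1 - r) * ∑' t, r ^ t * a t ≤ c * K * (1 - r) + c := by
  have hs0 : 1 - r ≠ 0 := (tsub_pos_of_lt hr).ne'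
  have hstop : 1 - r ≠ ∞ := (tsub_le_self.trans_lt one_lt_top).ne
  set s := 1 - r
  have hss : s * s⁻¹ = 1 := ENNReal.mul_inv_cancel hs0 hstop
  have key : s⁻¹ * ∑' t, r ^ t * a t ≤ s⁻¹ * (c * K) + s⁻¹ * (s⁻¹ * c) :=
    calc s⁻¹ * ∑' t, r ^ t * a t = ∑' n, r ^ n * ∑ t ∈ range (n + 1), a t :=
          inv_one_sub_mul_tsum_pow_mul r a
      _ ≤ ∑' n, r ^ n * (c * K + ∑ _t ∈ range (n + 1), c) := by
          refine ENNReal.tsum_le_tsum fun n => mul_le_mul_right ?_ _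
          simpa [mul_add, mul_comm] using ha (n + 1)
      _ = s⁻¹ * (c * K) + s⁻¹ * (s⁻¹ * c) := by
          simp_rw [mul_add, ENNReal.tsum_add, ENNReal.tsum_mul_right, ENNReal.tsum_geometric,
            ← inv_one_sub_mul_tsum_pow_mul, ENNReal.tsum_mul_right, ENNReal.tsum_geometric]
          rfl
  calc s * ∑' t, r ^ t * a t = s * s * (s⁻¹ * ∑' t, r ^ t * a t) := by
        rw [mul_assoc s s, ← mul_assoc s s⁻¹, hss, one_mul]
    _ ≤ s * s * (s⁻¹ * (c * K) + s⁻¹ * (s⁻¹ * c)) := mul_le_mul_right key _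
    _ = (s * s⁻¹) * (c * K) * s + (s * s⁻¹) * (s * s⁻¹) * c := by ring
    _ = c * K * s + c := by rw [hss]; ring

theorem ENNReal.exists_sum_range_le_of_limsup_lt {a : ℕ → ℝ≥0∞} {c : ℝ≥0∞}
    (h : limsup (fun N : ℕ => (N : ℝ≥0∞)⁻¹ * ∑ t ∈ range N, a t) atTop < c) :
    ∃ K : ℕ, ∀ n, ∑ t ∈ range n, a t ≤ c * (K + n) := by
  obtain ⟨K, hK⟩ := eventually_atTop.mp (eventually_lt_of_limsup_lt h)
  have hle : ∀ N, K ≤ N → ∑ t ∈ range N, a t ≤ c * N := by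
    intro N hN
    rcases eq_or_ne N 0 with rfl | hN0
    · simp
    · rw [mul_comm, ← ENNReal.inv_mul_le_iff (by simpa) (natCast_ne_top N)]
      exact (hK N hN).le
  refine ⟨K, fun n => ?_⟩
  rcases le_total K n with hKn | hnK
  · exact (hle n hKn).trans (mul_le_mul_right le_add_self _)
  · calc ∑ t ∈ range n, a t ≤ ∑ t ∈ range K, a t :=
          sum_le_sum_of_subset (range_subset_range.mpr hnK)
      _ ≤ c * K := hle K le_rfl
      _ ≤ c * (K + n) := mul_le_mul_right le_self_add _

theorem ENNReal.limsup_abel_le_of_sum_range_le {a : ℕ → ℝ≥0∞} {c : ℝ≥0∞} {K : ℕ}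
    (ha : ∀ n, ∑ t ∈ range n, a t ≤ c * (K + n)) :
    limsup (fun α : ℝ => ENNReal.ofReal (1 - α) * ∑' t, ENNReal.ofReal (α ^ t) * a t)
      (𝓝[Ico 0 1] 1) ≤ c := by
  rcases eq_or_ne c ∞ with rfl | hc
  · exact le_top
  have : (𝓝[Ico (0 : ℝ) 1] 1).NeBot := right_nhdsWithin_Ico_neBot zero_lt_one
  have hbound : ∀ᶠ α in 𝓝[Ico (0 : ℝ) 1] 1,
      ENNReal.ofReal (1 - α) * ∑' t, ENNReal.ofReal (α ^ t) * a t
        ≤ c * K * ENNReal.ofReal (1 - α) + c := by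
    filter_upwards [self_mem_nhdsWithin] with α ⟨hα0, hα1⟩
    simp_rw [ENNReal.ofReal_sub 1 hα0, ENNReal.ofReal_one, ENNReal.ofReal_pow hα0]
    exact one_sub_mul_tsum_pow_mul_le (ofReal_lt_one.mpr hα1) ha
  have hcont : Continuous fun α : ℝ => c * K * ENNReal.ofReal (1 - α) + c :=
    ((ENNReal.continuous_const_mul (mul_ne_top hc (natCast_ne_top K))).comp
      (ENNReal.continuous_ofReal.comp (continuous_const.sub continuous_id))).add continuous_const
  have hlim : Tendsto (fun α : ℝ => c * K * ENNReal.ofReal (1 - α) + c) (𝓝[Ico 0 1] 1) (𝓝 c) := by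
    simpa using (hcont.tendsto 1).mono_left nhdsWithin_le_nhds
  calc _ ≤ limsup (fun α : ℝ => c * K * ENNReal.ofReal (1 - α) + c) (𝓝[Ico 0 1] 1) :=
        limsup_le_limsup hbound
    _ = c := hlim.limsup_eq

end

/-- Abelian/Tauberian inequality. For any `a : ℕ → [0,+∞]`, the
upper Abel limit `limsup_{α→1⁻, α ∈ [0,1)} (1-α) ∑_t α^t a_t` is bounded above by the
upper Cesàro limit `limsup_N (1/N) ∑_{t<N} a_t`, all sums and products being taken in
the extended nonnegative reals. -/
theorem statement13 (a : ℕ → ℝ≥0∞) :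
    Filter.limsup
        (fun α : ℝ => ENNReal.ofReal (1 - α) * ∑' t : ℕ, ENNReal.ofReal (α ^ t) * a t)
        (𝓝[Set.Ico (0 : ℝ) 1] 1)
      ≤ Filter.limsup
          (fun N : ℕ => ((N : ℝ≥0∞))⁻¹ * ∑ t ∈ Finset.range N, a t) atTop := by
  refine le_of_forall_gt_imp_ge_of_dense fun c hc => ?_
  obtain ⟨K, hK⟩ := ENNReal.exists_sum_range_le_of_limsup_lt hc
  exact ENNReal.limsup_abel_le_of_sum_range_le hK
end
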